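/- arXiv:2510.15326 — 2 statements merged into one kernel-verified Lean document; each statement's English description precedes it below -/
import Mathlib

section
/- Let Ω ⊆ ℂ be open and let u : Ω → ℝ and α, β, φ : Ω → ℂ be smooth. Suppose that on Ω: e^{2u} = |α|² + |β|²; α_z̄ = 0; β is nowhere vanishing and β = c·|β| for some constant c ∈ ℂ with |c| = 1 (the argument of β is constant); and (1/2)·(ᾱ)_z̄·α − e^{2u}·φ̄ − u_z̄·e^{2u} + β·(β̄)_z̄ = (1/2)·(ᾱ)_z·β. Then φ ≡ 0 on Ω. -/
open Complex ComplexConjugate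

/-- Wirtinger derivative `g_z = (∂ₓg - i ∂_y g)/2`. -/
noncomputable def wderivZ (g : ℂ → ℂ) (w : ℂ) : ℂ :=
  (fderiv ℝ g w 1 - Complex.I * fderiv ℝ g w Complex.I) / 2

/-- Wirtinger derivative `g_z̄ = (∂ₓg + i ∂_y g)/2`. -/
noncomputable def wderivZbar (g : ℂ → ℂ) (w : ℂ) : ℂ :=
  (fderiv ℝ g w 1 + Complex.I * fderiv ℝ g w Complex.I) / 2

/-!
Apply `∂_z̄` to `e^{2u} = α ᾱ + β β̄`. As `α_z̄ = 0`, this gives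
`2 e^{2u} u_z̄ = α (ᾱ)_z̄ + β_z̄ β̄ + β (β̄)_z̄`, and since `β̄ = c̄² β` with `c̄²` constant, the last
two terms agree. Also `(ᾱ)_z = conj (α_z̄) = 0`, so the structure equation reads
`e^{2u} φ̄ = ½ α (ᾱ)_z̄ - e^{2u} u_z̄ + β (β̄)_z̄`, which is `0` by the differentiated identity.
-/

open Filter Topology

section Wirtinger

variable {f g : ℂ → ℂ} {w : ℂ}

theorem fderiv_conj_apply (v : ℂ) :
    fderiv ℝ (fun z => conj (g z)) w v = conj (fderiv ℝ g w v) := by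
  simpa using congrArg (· v) (fderiv_star (𝕜 := ℝ) (f := g) (x := w))

theorem wderivZ_conj :
    wderivZ (fun z => conj (g z)) w = conj (wderivZbar g w) := by
  simp only [wderivZbar, wderivZ, fderiv_conj_apply, map_div₀, map_add, map_mul, conj_I,
    map_ofNat]
  ring

theorem Filter.EventuallyEq.wderivZbar_eq (h : f =ᶠ[𝓝 w] g) :
    wderivZbar f w = wderivZbar g w := by
  simp only [wderivZbar, h.fderiv_eq]

theorem wderivZbar_add (hf : DifferentiableAt ℝ f w) (hg : DifferentiableAt ℝ g w) :
    wderivZbar (fun z => f z + g z) w = wderivZbar f w + wderivZbar g w := by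
  simp only [wderivZbar, fderiv_fun_add hf hg, add_apply]
  ring

theorem wderivZbar_mul (hf : DifferentiableAt ℝ f w) (hg : DifferentiableAt ℝ g w) :
    wderivZbar (fun z => f z * g z) w = wderivZbar f w * g w + f w * wderivZbar g w := by
  simp only [wderivZbar, fderiv_fun_mul hf hg, add_apply, smul_apply,
    smul_eq_mul]
  ring

theorem wderivZbar_const_mul (c : ℂ) (hg : DifferentiableAt ℝ g w) :
    wderivZbar (fun z => c * g z) w = c * wderivZbar g w := by
  simp only [wderivZbar, fderiv_const_mul hg, smul_apply, smul_eq_mul]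
  ring

theorem HasDerivAt.wderivZbar_ofReal_comp {h : ℝ → ℝ} {h' : ℝ} {u : ℂ → ℝ}
    (hh : HasDerivAt h h' (u w)) (hu : DifferentiableAt ℝ u w) :
    wderivZbar (fun z => (h (u z) : ℂ)) w = h' * wderivZbar (fun z => (u z : ℂ)) w := by
  have hcomp : HasFDerivAt (fun z => (h (u z) : ℂ)) (ofRealCLM.comp (h' • fderiv ℝ u w)) w :=
    ofRealCLM.hasFDerivAt.comp w (hh.comp_hasFDerivAt w hu.hasFDerivAt)
  have hu' : HasFDerivAt (fun z => (u z : ℂ)) (ofRealCLM.comp (fderiv ℝ u w)) w :=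
    ofRealCLM.hasFDerivAt.comp w hu.hasFDerivAt
  simp only [wderivZbar, hcomp.fderiv, hu'.fderiv, ContinuousLinearMap.comp_smulₛₗ,
    Real.ringHom_apply, smul_apply, ContinuousLinearMap.comp_apply, ofRealCLM_apply, real_smul]
  ring

theorem wderivZbar_ofReal_exp_two_mul {u : ℂ → ℝ} (hu : DifferentiableAt ℝ u w) :
    wderivZbar (fun z => (Real.exp (2 * u z) : ℂ)) w
      = 2 * Real.exp (2 * u w) * wderivZbar (fun z => (u z : ℂ)) w := by
  have hexp : HasDerivAt (fun t => Real.exp (2 * t)) (Real.exp (2 * u w) * 2) (u w) := by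
    simpa using ((hasDerivAt_id (u w)).const_mul 2).exp
  rw [hexp.wderivZbar_ofReal_comp hu]
  push_cast
  ring

theorem DifferentiableAt.mul_conj (hg : DifferentiableAt ℝ g w) :
    DifferentiableAt ℝ (fun z => g z * conj (g z)) w :=
  hg.fun_mul hg.star

theorem wderivZbar_mul_conj (hg : DifferentiableAt ℝ g w) :
    wderivZbar (fun z => g z * conj (g z)) w
      = wderivZbar g w * conj (g w) + g w * wderivZbar (fun z => conj (g z)) w :=
  wderivZbar_mul hg hg.star

theorem conj_eq_conj_sq_mul_of_eq_mul_norm {b c : ℂ} (hc : ‖c‖ = 1) (hb : b = c * ‖b‖) :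
    conj b = conj c ^ 2 * b := by
  have hcc : conj c * c = 1 := by
    rw [mul_comm, mul_conj, normSq_eq_norm_sq, hc]
    norm_num
  rw [hb, map_mul, conj_ofReal]
  linear_combination (conj c * (‖b‖ : ℂ)) * hcc.symm

theorem mul_wderivZbar_conj_of_eventually_eq_mul_norm {β : ℂ → ℂ} {c : ℂ} (hc : ‖c‖ = 1)
    (hβ : DifferentiableAt ℝ β w) (hβc : ∀ᶠ z in 𝓝 w, β z = c * ‖β z‖) :
    β w * wderivZbar (fun z => conj (β z)) w = wderivZbar β w * conj (β w) := by
  have hconj : (fun z => conj (β z)) =ᶠ[𝓝 w] fun z => conj c ^ 2 * β z :=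
    hβc.mono fun z hz => conj_eq_conj_sq_mul_of_eq_mul_norm hc hz
  rw [hconj.wderivZbar_eq, wderivZbar_const_mul _ hβ,
    conj_eq_conj_sq_mul_of_eq_mul_norm hc hβc.self_of_nhds]
  ring

end Wirtinger

theorem stmt2_general (Ω : Set ℂ) (hΩ : IsOpen Ω)
    (u : ℂ → ℝ) (α β φ : ℂ → ℂ)
    (hu : ContDiffOn ℝ (⊤ : ℕ∞) u Ω)
    (hα : ContDiffOn ℝ (⊤ : ℕ∞) α Ω)
    (hβ : ContDiffOn ℝ (⊤ : ℕ∞) β Ω)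
    (h1 : ∀ w ∈ Ω, Real.exp (2 * u w) = ‖α w‖ ^ 2 + ‖β w‖ ^ 2)
    (h2 : ∀ w ∈ Ω, wderivZbar α w = 0)
    (hargβ : ∃ c : ℂ, ‖c‖ = 1 ∧ ∀ w ∈ Ω, β w = c * (‖β w‖ : ℂ))
    (h4 : ∀ w ∈ Ω,
      (1 / 2 : ℂ) * wderivZbar (fun z => conj (α z)) w * α w
        - (Real.exp (2 * u w) : ℂ) * conj (φ w)
        - wderivZbar (fun z => (u z : ℂ)) w * (Real.exp (2 * u w) : ℂ)
        + β w * wderivZbar (fun z => conj (β z)) w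
        = (1 / 2 : ℂ) * wderivZ (fun z => conj (α z)) w * β w) :
    ∀ w ∈ Ω, φ w = 0 := by
  obtain ⟨c, hc, hβc⟩ := hargβ
  intro w hw
  have hΩw : Ω ∈ 𝓝 w := hΩ.mem_nhds hw
  have hud : DifferentiableAt ℝ u w := (hu.contDiffAt hΩw).differentiableAt (by simp)
  have hαd : DifferentiableAt ℝ α w := (hα.contDiffAt hΩw).differentiableAt (by simp)
  have hβd : DifferentiableAt ℝ β w := (hβ.contDiffAt hΩw).differentiableAt (by simp)
  have hβterm := mul_wderivZbar_conj_of_eventually_eq_mul_norm hc hβd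
    (eventually_of_mem hΩw hβc)
  have hαz : wderivZ (fun z => conj (α z)) w = 0 := by rw [wderivZ_conj, h2 w hw, map_zero]
  have hexp : (fun z => (Real.exp (2 * u z) : ℂ))
      =ᶠ[𝓝 w] fun z => α z * conj (α z) + β z * conj (β z) :=
    eventually_of_mem hΩw fun z hz => by
      simp only [mul_conj, normSq_eq_norm_sq, h1 z hz]
      push_cast
      ring
  have hdexp : 2 * Real.exp (2 * u w) * wderivZbar (fun z => (u z : ℂ)) w
      = α w * wderivZbar (fun z => conj (α z)) w
        + 2 * (β w * wderivZbar (fun z => conj (β z)) w) := by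
    rw [← wderivZbar_ofReal_exp_two_mul hud, hexp.wderivZbar_eq,
      wderivZbar_add hαd.mul_conj hβd.mul_conj, wderivZbar_mul_conj hαd,
      wderivZbar_mul_conj hβd, h2 w hw, hβterm]
    ring
  have hφ : (Real.exp (2 * u w) : ℂ) * conj (φ w) = 0 := by
    linear_combination (-1 : ℂ) * h4 w hw - (1 / 2 : ℂ) * hdexp - (1 / 2 * β w) * hαz
  simpa [Real.exp_ne_zero] using hφ

theorem stmt2 (Ω : Set ℂ) (hΩ : IsOpen Ω)
    (u : ℂ → ℝ) (α β φ : ℂ → ℂ)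
    (hu : ContDiffOn ℝ (⊤ : ℕ∞) u Ω)
    (hα : ContDiffOn ℝ (⊤ : ℕ∞) α Ω)
    (hβ : ContDiffOn ℝ (⊤ : ℕ∞) β Ω)
    (hφ : ContDiffOn ℝ (⊤ : ℕ∞) φ Ω)
    (h1 : ∀ w ∈ Ω, Real.exp (2 * u w) = ‖α w‖ ^ 2 + ‖β w‖ ^ 2)
    (h2 : ∀ w ∈ Ω, wderivZbar α w = 0)
    (hβ0 : ∀ w ∈ Ω, β w ≠ 0)
    (hargβ : ∃ c : ℂ, ‖c‖ = 1 ∧ ∀ w ∈ Ω, β w = c * (‖β w‖ : ℂ))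
    (h4 : ∀ w ∈ Ω,
      (1 / 2 : ℂ) * wderivZbar (fun z => conj (α z)) w * α w
        - (Real.exp (2 * u w) : ℂ) * conj (φ w)
        - wderivZbar (fun z => (u z : ℂ)) w * (Real.exp (2 * u w) : ℂ)
        + β w * wderivZbar (fun z => conj (β z)) w
        = (1 / 2 : ℂ) * wderivZ (fun z => conj (α z)) w * β w) :
    ∀ w ∈ Ω, φ w = 0 :=
  stmt2_general Ω hΩ u α β φ hu hα hβ h1 h2 hargβ h4
end

section
/- Let Ω ⊆ ℂ be open, let u : Ω → ℝ and β : Ω → ℝ be smooth with β > 0 on Ω, let α : Ω → ℂ be holomorphic and nowhere vanishing, and suppose e^{2u} = |α|² + β² and (1/2)ᾱ α_z + β β_z − u_z e^{2u} = 0 on Ω. Define Ĉ := (1/2) e^{−u} β, so that 0 < Ĉ < 1/2 on Ω. Then the equation u_{zz̄} e^u β² − (1/4)|α_z|² e^u − |u_z|² e^u |α|² + (1/2)α_z u_z̄ e^u ᾱ + (1/2)(ᾱ)_z̄ u_z e^u α + 2β⁴ = 0 holds on Ω if and only if u_{zz̄} + 8 e^u Ĉ² − 4|Ĉ_z|²/(1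 − 4Ĉ²) = 0 holds on Ω. -/
open Complex ComplexConjugate

/-!
Write `E = e^u` and `Y = α_z/2 - α u_z`. Using `e^{2u} = |α|² + β²`, the structure equation
becomes `β (β_z - β u_z) = -ᾱ Y`. Since `Ĉ_z = e^{-u} (β_z - β u_z) / 2` and
`1 - 4Ĉ² = |α|² e^{-2u}`, this gives `4|Ĉ_z|² / (1 - 4Ĉ²) = |Y|² / β²`, so the second equation reads
`u_{zz̄} + 2β² e^{-u} - |Y|²/β² = 0`. The first equation is `E β² u_{zz̄} - E |Y|² + 2β⁴ = 0`,
i.e. `E β²` times the second; as `E β² ≠ 0`, the two are equivalent.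
-/

lemma wderivZbar_conj (g : ℂ → ℂ) (w : ℂ) :
    wderivZbar (fun z => conj (g z)) w = conj (wderivZ g w) := by
  have hconj : (fun z => conj (g z)) = conjCLE ∘ g := rfl
  simp only [wderivZ, wderivZbar, hconj, conjCLE.comp_fderiv, ContinuousLinearMap.comp_apply,
    ContinuousLinearEquiv.coe_coe, conjCLE_apply, map_div₀, map_sub, map_mul, conj_I, map_ofNat]
  ring

lemma wderivZbar_ofReal (f : ℂ → ℝ) (w : ℂ) :
    wderivZbar (fun z => (f z : ℂ)) w = conj (wderivZ (fun z => (f z : ℂ)) w) := by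
  simpa only [conj_ofReal] using wderivZbar_conj (fun z => (f z : ℂ)) w

lemma HasFDerivAt.wderivZ_ofReal {f : ℂ → ℝ} {f' : ℂ →L[ℝ] ℝ} {w : ℂ} (hf : HasFDerivAt f f' w) :
    wderivZ (fun z => (f z : ℂ)) w = ((f' 1 : ℂ) - I * f' I) / 2 := by
  have hcomp : HasFDerivAt (fun z => (f z : ℂ)) (ofRealCLM.comp f') w :=
    ofRealCLM.hasFDerivAt.comp w hf
  simp [wderivZ, hcomp.fderiv]

lemma wderivZ_half_exp_neg_mul {u β : ℂ → ℝ} {w : ℂ}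
    (hu : DifferentiableAt ℝ u w) (hβ : DifferentiableAt ℝ β w) :
    wderivZ (fun z => (((1 / 2 : ℝ) * Real.exp (-u z) * β z : ℝ) : ℂ)) w
      = (((1 / 2 : ℝ) * Real.exp (-u w) : ℝ) : ℂ)
        * (wderivZ (fun z => (β z : ℂ)) w - β w * wderivZ (fun z => (u z : ℂ)) w) := by
  have hC : HasFDerivAt (fun z => (1 / 2 : ℝ) * Real.exp (-u z) * β z) _ w :=
    ((hu.hasFDerivAt.neg.exp).const_mul (1 / 2 : ℝ)).mul hβ.hasFDerivAt
  rw [hC.wderivZ_ofReal, hu.hasFDerivAt.wderivZ_ofReal, hβ.hasFDerivAt.wderivZ_ofReal]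
  simp only [add_apply, smul_apply, neg_apply, smul_eq_mul, Pi.neg_apply]
  push_cast
  ring

lemma gauss_expr_eq_sub_norm_sq (E b : ℝ) (a A U L : ℂ) :
    L * (E : ℂ) * (b : ℂ) ^ 2 - (1 / 4 : ℂ) * (‖A‖ : ℂ) ^ 2 * (E : ℂ)
        - (‖U‖ : ℂ) ^ 2 * (E : ℂ) * (‖a‖ : ℂ) ^ 2
        + (1 / 2 : ℂ) * A * conj U * (E : ℂ) * conj a
        + (1 / 2 : ℂ) * conj A * U * (E : ℂ) * a + 2 * (b : ℂ) ^ 4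
      = E * b ^ 2 * L - E * (‖(1 / 2 : ℂ) * A - a * U‖ : ℂ) ^ 2 + 2 * b ^ 4 := by
  simp only [← mul_conj', map_sub, map_mul, map_div₀, map_one, map_ofNat]
  ring

lemma four_mul_norm_sq_div_eq {E b : ℝ} {a B U Y : ℂ} (hE : E ≠ 0) (hb : b ≠ 0) (ha : a ≠ 0)
    (h1 : (E : ℂ) ^ 2 = a * conj a + b ^ 2) (hY : (b : ℂ) * (B - b * U) = -(conj a * Y)) :
    4 * (‖(((1 / 2 : ℝ) * E⁻¹ : ℝ) : ℂ) * (B - b * U)‖ : ℂ) ^ 2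
      / (1 - 4 * (((1 / 2 : ℝ) * E⁻¹ * b : ℝ) : ℂ) ^ 2) = (‖Y‖ : ℂ) ^ 2 / b ^ 2 := by
  have hE0 : (E : ℂ) ≠ 0 := ofReal_ne_zero.mpr hE
  have hb0 : (b : ℂ) ≠ 0 := ofReal_ne_zero.mpr hb
  have hca : conj a ≠ 0 := by simpa using ha
  have hden : (1 : ℂ) - 4 * (((1 / 2 : ℝ) * E⁻¹ * b : ℝ) : ℂ) ^ 2 = a * conj a / E ^ 2 := by
    push_cast; field_simp; linear_combination 4 * h1
  have hYc : (b : ℂ) * (conj B - b * conj U) = -(a * conj Y) := by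
    simpa [conj_ofReal] using congrArg conj hY
  have hprod : (b : ℂ) ^ 2 * ((B - b * U) * conj (B - b * U)) = a * conj a * (Y * conj Y) := by
    simp only [map_sub, map_mul, conj_ofReal]
    linear_combination (b * (conj B - b * conj U)) * hY - conj a * Y * hYc
  rw [hden, ← mul_conj', ← mul_conj', map_mul, conj_ofReal]
  push_cast
  field_simp
  linear_combination 4 * hprod

lemma gauss_eq_exp_mul_castroUrbano_eq {t b : ℝ} {a A U B L : ℂ} (hb : b ≠ 0) (ha : a ≠ 0)
    (h1 : Real.exp (2 * t) = ‖a‖ ^ 2 + b ^ 2)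
    (h2 : (1 / 2 : ℂ) * conj a * A + b * B - U * (Real.exp (2 * t) : ℂ) = 0) :
    L * (Real.exp t : ℂ) * (b : ℂ) ^ 2 - (1 / 4 : ℂ) * (‖A‖ : ℂ) ^ 2 * (Real.exp t : ℂ)
        - (‖U‖ : ℂ) ^ 2 * (Real.exp t : ℂ) * (‖a‖ : ℂ) ^ 2
        + (1 / 2 : ℂ) * A * conj U * (Real.exp t : ℂ) * conj a
        + (1 / 2 : ℂ) * conj A * U * (Real.exp t : ℂ) * a + 2 * (b : ℂ) ^ 4
      = Real.exp t * b ^ 2 *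
        (L + 8 * (Real.exp t : ℂ) * (((1 / 2 : ℝ) * Real.exp (-t) * b : ℝ) : ℂ) ^ 2
          - 4 * (‖(((1 / 2 : ℝ) * Real.exp (-t) : ℝ) : ℂ) * (B - b * U)‖ : ℂ) ^ 2
            / (1 - 4 * (((1 / 2 : ℝ) * Real.exp (-t) * b : ℝ) : ℂ) ^ 2)) := by
  have hE2 : Real.exp (2 * t) = Real.exp t ^ 2 := by rw [← Real.exp_nat_mul]; norm_num
  have h1' : (Real.exp t : ℂ) ^ 2 = a * conj a + b ^ 2 := by
    rw [mul_conj', ← ofReal_pow, ← hE2, h1]; push_cast; ring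
  have hY : (b : ℂ) * (B - b * U) = -(conj a * ((1 / 2 : ℂ) * A - a * U)) := by
    rw [hE2, ofReal_pow] at h2; linear_combination h2 + U * h1'
  rw [gauss_expr_eq_sub_norm_sq, Real.exp_neg,
    four_mul_norm_sq_div_eq (Real.exp_pos t).ne' hb ha h1' hY]
  have hE0 : (Real.exp t : ℂ) ≠ 0 := ofReal_ne_zero.mpr (Real.exp_pos t).ne'
  have hb0 : (b : ℂ) ≠ 0 := ofReal_ne_zero.mpr hb
  push_cast
  field_simp
  ring

theorem stmt5_general (Ω : Set ℂ) (hΩ : IsOpen Ω)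
    (u : ℂ → ℝ) (β : ℂ → ℝ) (α : ℂ → ℂ)
    (hu : ContDiffOn ℝ (⊤ : ℕ∞) u Ω)
    (hβ : ContDiffOn ℝ (⊤ : ℕ∞) β Ω)
    (hβpos : ∀ w ∈ Ω, 0 < β w)
    (hα0 : ∀ w ∈ Ω, α w ≠ 0)
    (h1 : ∀ w ∈ Ω, Real.exp (2 * u w) = ‖α w‖ ^ 2 + β w ^ 2)
    (h2 : ∀ w ∈ Ω,
      (1 / 2 : ℂ) * conj (α w) * wderivZ α w + (β w : ℂ) * wderivZ (fun z => (β z : ℂ)) w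
        - wderivZ (fun z => (u z : ℂ)) w * (Real.exp (2 * u w) : ℂ) = 0) :
    -- `Ĉ := (1/2) e^{−u} β`, so `0 < Ĉ < 1/2` on `Ω`
    (∀ w ∈ Ω,
        wderivZbar (fun z => wderivZ (fun z' => (u z' : ℂ)) z) w * (Real.exp (u w) : ℂ)
            * (β w : ℂ) ^ 2
          - (1 / 4 : ℂ) * (‖wderivZ α w‖ : ℂ) ^ 2 * (Real.exp (u w) : ℂ)
          - (‖wderivZ (fun z => (u z : ℂ)) w‖ : ℂ) ^ 2 * (Real.exp (u w) : ℂ)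
            * (‖α w‖ : ℂ) ^ 2
          + (1 / 2 : ℂ) * wderivZ α w * wderivZbar (fun z => (u z : ℂ)) w
            * (Real.exp (u w) : ℂ) * conj (α w)
          + (1 / 2 : ℂ) * wderivZbar (fun z => conj (α z)) w * wderivZ (fun z => (u z : ℂ)) w
            * (Real.exp (u w) : ℂ) * α w
          + 2 * (β w : ℂ) ^ 4 = 0)
    ↔
    (∀ w ∈ Ω,
        wderivZbar (fun z => wderivZ (fun z' => (u z' : ℂ)) z) w
          + 8 * (Real.exp (u w) : ℂ)
            * (((1 / 2 : ℝ) * Real.exp (-u w) * β w : ℝ) : ℂ) ^ 2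
          - 4 * (‖wderivZ (fun z => (((1 / 2 : ℝ) * Real.exp (-u z) * β z : ℝ) : ℂ)) w‖ : ℂ) ^ 2
            / (1 - 4 * (((1 / 2 : ℝ) * Real.exp (-u w) * β w : ℝ) : ℂ) ^ 2) = 0) := by
  refine forall₂_congr fun w hw => ?_
  have hud : DifferentiableAt ℝ u w :=
    (hu.contDiffAt (hΩ.mem_nhds hw)).differentiableAt (by simp)
  have hβd : DifferentiableAt ℝ β w :=
    (hβ.contDiffAt (hΩ.mem_nhds hw)).differentiableAt (by simp)
  have hne : (Real.exp (u w) : ℂ) * (β w : ℂ) ^ 2 ≠ 0 := by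
    simp [(hβpos w hw).ne']
  rw [wderivZbar_ofReal u w, wderivZbar_conj α w, wderivZ_half_exp_neg_mul hud hβd,
    gauss_eq_exp_mul_castroUrbano_eq (hβpos w hw).ne' (hα0 w hw) (h1 w hw) (h2 w hw)]
  exact mul_eq_zero_iff_left hne

theorem stmt5 (Ω : Set ℂ) (hΩ : IsOpen Ω)
    (u : ℂ → ℝ) (β : ℂ → ℝ) (α : ℂ → ℂ)
    (hu : ContDiffOn ℝ (⊤ : ℕ∞) u Ω)
    (hβ : ContDiffOn ℝ (⊤ : ℕ∞) β Ω)
    (hβpos : ∀ w ∈ Ω, 0 < β w)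
    (hα : DifferentiableOn ℂ α Ω)
    (hα0 : ∀ w ∈ Ω, α w ≠ 0)
    (h1 : ∀ w ∈ Ω, Real.exp (2 * u w) = ‖α w‖ ^ 2 + β w ^ 2)
    (h2 : ∀ w ∈ Ω,
      (1 / 2 : ℂ) * conj (α w) * wderivZ α w + (β w : ℂ) * wderivZ (fun z => (β z : ℂ)) w
        - wderivZ (fun z => (u z : ℂ)) w * (Real.exp (2 * u w) : ℂ) = 0) :
    -- `Ĉ := (1/2) e^{−u} β`, so `0 < Ĉ < 1/2` on `Ω`
    (∀ w ∈ Ω,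
        wderivZbar (fun z => wderivZ (fun z' => (u z' : ℂ)) z) w * (Real.exp (u w) : ℂ)
            * (β w : ℂ) ^ 2
          - (1 / 4 : ℂ) * (‖wderivZ α w‖ : ℂ) ^ 2 * (Real.exp (u w) : ℂ)
          - (‖wderivZ (fun z => (u z : ℂ)) w‖ : ℂ) ^ 2 * (Real.exp (u w) : ℂ)
            * (‖α w‖ : ℂ) ^ 2
          + (1 / 2 : ℂ) * wderivZ α w * wderivZbar (fun z => (u z : ℂ)) w
            * (Real.exp (u w) : ℂ) * conj (α w)
          + (1 / 2 : ℂ) * wderivZbar (fun z => conj (α z)) w * wderivZ (fun z => (u z : ℂ)) w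
            * (Real.exp (u w) : ℂ) * α w
          + 2 * (β w : ℂ) ^ 4 = 0)
    ↔
    (∀ w ∈ Ω,
        wderivZbar (fun z => wderivZ (fun z' => (u z' : ℂ)) z) w
          + 8 * (Real.exp (u w) : ℂ)
            * (((1 / 2 : ℝ) * Real.exp (-u w) * β w : ℝ) : ℂ) ^ 2
          - 4 * (‖wderivZ (fun z => (((1 / 2 : ℝ) * Real.exp (-u z) * β z : ℝ) : ℂ)) w‖ : ℂ) ^ 2
            / (1 - 4 * (((1 / 2 : ℝ) * Real.exp (-u w) * β w : ℝ) : ℂ) ^ 2) = 0) :=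
  stmt5_general Ω hΩ u β α hu hβ hβpos hα0 h1 h2
end
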